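/- arXiv:2512.12460 — 3 statements merged into one kernel-verified Lean document; each statement's English description precedes it below -/
import Mathlib

section
/- Let A be a differential graded algebra, M a left DG A-module, and N ⊆ M a graded A-submodule. Define N₊ = N + d(N) and N₋ = {m ∈ N : d(m) ∈ N}. Then N₋ and N₊ are DG submodules of M, and the inclusion N₋ ↪ N₊ is a quasi-isomorphism (i.e., induces an isomorphism on all cohomology groups). -/
/-! Every element `n + d p` of `N₊ = N + d N` has the same differential as `n ∈ N`, which
gives closure under `d` and both halves of the quasi-isomorphism. For homogeneous `a` the
Leibniz rule rewrites `a • d m` as `±(d (a • m) - (d a) • m)` and `d (a • m)` as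
`(d a) • m ± a • d m`, which gives closure under the `A`-action; a general `a` is a sum of
homogeneous ones. -/

namespace Submodule

section Differential

variable {R M : Type*} [Semiring R] [AddCommMonoid M] [Module R M]

/-- `N₊ = N + d N`. -/
def dHull (d : M →ₗ[R] M) (N : Submodule R M) : Submodule R M := N ⊔ N.map d

/-- `N₋ = {m ∈ N | d m ∈ N}`. -/
def dCore (d : M →ₗ[R] M) (N : Submodule R M) : Submodule R M := N ⊓ N.comap d

variable {d : M →ₗ[R] M} {N : Submodule R M}

theorem mem_dHull {m : M} : m ∈ dHull d N ↔ ∃ n ∈ N, ∃ p ∈ N, n + d p = m := by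
  simp only [dHull, mem_sup, mem_map, exists_exists_and_eq_and]

theorem le_dHull : N ≤ dHull d N := le_sup_left

theorem map_mem_dHull_of_mem {m : M} (hm : m ∈ N) : d m ∈ dHull d N :=
  mem_sup_right (mem_map_of_mem hm)

theorem mem_dCore_of_map_eq_zero {m : M} (hm : m ∈ N) (hdm : d m = 0) : m ∈ dCore d N :=
  ⟨hm, show d m ∈ N from hdm ▸ N.zero_mem⟩

variable (hd : ∀ m, d (d m) = 0)
include hd

theorem exists_mem_map_eq_of_mem_dHull {y : M} (hy : y ∈ dHull d N) : ∃ n ∈ N, d y = d n := by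
  obtain ⟨n, hn, p, -, rfl⟩ := mem_dHull.mp hy
  exact ⟨n, hn, by rw [map_add, hd, add_zero]⟩

theorem map_mem_dHull {m : M} (hm : m ∈ dHull d N) : d m ∈ dHull d N := by
  obtain ⟨n, hn, hdm⟩ := exists_mem_map_eq_of_mem_dHull hd hm
  exact hdm ▸ map_mem_dHull_of_mem hn

theorem map_mem_dCore {m : M} (hm : m ∈ dCore d N) : d m ∈ dCore d N :=
  mem_dCore_of_map_eq_zero hm.2 (hd m)

theorem exists_mem_dCore_add_of_mem_dHull {m : M} (hm : m ∈ dHull d N) (hdm : d m = 0) :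
    ∃ x ∈ dCore d N, ∃ y ∈ dHull d N, m = x + d y := by
  obtain ⟨n, hn, p, hp, rfl⟩ := mem_dHull.mp hm
  have hdn : d n = 0 := by rwa [map_add, hd, add_zero] at hdm
  exact ⟨n, mem_dCore_of_map_eq_zero hn hdn, p, le_dHull hp, rfl⟩

theorem exists_mem_dCore_eq_map_of_eq_map {x y : M} (hx : x ∈ dCore d N) (hy : y ∈ dHull d N)
    (hxy : x = d y) : ∃ z ∈ dCore d N, x = d z := by
  obtain ⟨n, hn, hdy⟩ := exists_mem_map_eq_of_mem_dHull hd hy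
  rw [hdy] at hxy
  exact ⟨n, ⟨hn, show d n ∈ N from hxy ▸ hx.1⟩, hxy⟩

end Differential

section Leibniz

variable {k A M : Type*} [CommRing k] [Ring A] [Algebra k A] [AddCommGroup M] [Module k M]
  [Module A M] {𝒜 : ℤ → Submodule k A} {dA : A →ₗ[k] A} {dM : M →ₗ[k] M}
  (hA : (⨆ i, 𝒜 i) = ⊤)
  (hLeib : ∀ (i : ℤ), ∀ a ∈ 𝒜 i, ∀ m : M,
    dM (a • m) = dA a • m + ((Int.negOnePow i : ℤˣ) : ℤ) • (a • dM m))
  (N : Submodule A M)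
include hA hLeib

theorem smul_map_mem_dHull [IsScalarTower k A M] (a : A) {m : M} (hm : m ∈ N) :
    a • dM m ∈ dHull dM (N.restrictScalars k) := by
  induction a using iSup_induction 𝒜 (hx := hA ▸ mem_top) with
  | mem i a ha =>
    have hsolve :
        a • dM m = ((Int.negOnePow i : ℤˣ) : ℤ) • (dM (a • m) - dA a • m) := by
      rw [hLeib i a ha, add_sub_cancel_left, smul_smul, ← Units.val_mul, Int.units_mul_self,
        Units.val_one, one_smul]
    rw [hsolve]
    exact zsmul_mem (sub_mem (map_mem_dHull_of_mem (N := N.restrictScalars k)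
      (N.smul_mem a hm)) (le_dHull (N.smul_mem (dA a) hm))) _
  | zero => rw [zero_smul]; exact zero_mem _
  | add a b ha hb => rw [add_smul]; exact add_mem ha hb

theorem map_smul_mem_of_map_mem (a : A) {m : M} (hm : m ∈ N) (hdm : dM m ∈ N) :
    dM (a • m) ∈ N := by
  induction a using iSup_induction 𝒜 (hx := hA ▸ mem_top) with
  | mem i a ha =>
    rw [hLeib i a ha]
    exact add_mem (N.smul_mem _ hm) (zsmul_mem (N.smul_mem a hdm) _)
  | zero => rw [zero_smul, map_zero]; exact zero_mem _
  | add a b ha hb => rw [add_smul, map_add]; exact add_mem ha hb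

theorem smul_mem_dHull [IsScalarTower k A M] (a : A) {m : M}
    (hm : m ∈ dHull dM (N.restrictScalars k)) :
    a • m ∈ dHull dM (N.restrictScalars k) := by
  obtain ⟨n, hn, p, hp, rfl⟩ := mem_dHull.mp hm
  rw [smul_add]
  exact add_mem (le_dHull (N.smul_mem a hn)) (smul_map_mem_dHull hA hLeib N a hp)

theorem smul_mem_dCore [IsScalarTower k A M] (a : A) {m : M}
    (hm : m ∈ dCore dM (N.restrictScalars k)) :
    a • m ∈ dCore dM (N.restrictScalars k) :=
  ⟨N.smul_mem a hm.1, map_smul_mem_of_map_mem hA hLeib N a hm.1 hm.2⟩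

end Leibniz

end Submodule

open Submodule in
theorem stmt0_general (k : Type*) [Field k] (A : Type*) [Ring A] [Algebra k A]
    (M : Type*) [AddCommGroup M] [Module k M] [Module A M] [IsScalarTower k A M]
    -- grading of the DG algebra `A`
    (𝒜 : ℤ → Submodule k A) (hA : (⨆ i, 𝒜 i) = ⊤)
    -- the differentials, of degree `+1`, squaring to zero
    (dA : A →ₗ[k] A) (dM : M →ₗ[k] M)
    (hdM2 : ∀ m, dM (dM m) = 0)
    -- graded Leibniz rule for the module differential
    (hLeib : ∀ (i : ℤ), ∀ a ∈ 𝒜 i, ∀ m : M,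
      dM (a • m) = dA a • m + ((Int.negOnePow i : ℤˣ) : ℤ) • (a • dM m))
    -- a graded `A`-submodule `N` of `M`
    (N : Submodule A M) :
    -- `N₊ := N + dM(N)` and `N₋ := {m ∈ N : dM m ∈ N}`
    ∀ NP NM : Submodule k M,
      NP = N.restrictScalars k ⊔ (N.restrictScalars k).map dM →
      NM = N.restrictScalars k ⊓ (N.restrictScalars k).comap dM →
      -- `N₊` and `N₋` are `A`-submodules of `M` ...
      (∀ a : A, ∀ m ∈ NP, a • m ∈ NP) ∧
      (∀ a : A, ∀ m ∈ NM, a • m ∈ NM) ∧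
      -- ... closed under the differential, i.e. DG submodules ...
      (∀ m ∈ NP, dM m ∈ NP) ∧
      (∀ m ∈ NM, dM m ∈ NM) ∧
      -- ... and the inclusion `N₋ ↪ N₊` is surjective on cohomology ...
      (∀ m ∈ NP, dM m = 0 → ∃ x ∈ NM, ∃ y ∈ NP, m = x + dM y) ∧
      -- ... and injective on cohomology.
      (∀ x ∈ NM, dM x = 0 → (∃ y ∈ NP, x = dM y) → ∃ z ∈ NM, x = dM z) := by
  rintro _ _ rfl rfl
  exact ⟨fun a _ hm => smul_mem_dHull hA hLeib N a hm,
    fun a _ hm => smul_mem_dCore hA hLeib N a hm,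
    fun _ => map_mem_dHull hdM2,
    fun _ => map_mem_dCore hdM2,
    fun _ hm hdm => exists_mem_dCore_add_of_mem_dHull hdM2 hm hdm,
    fun _ hx _ ⟨_, hy, hxy⟩ => exists_mem_dCore_eq_map_of_eq_map hdM2 hx hy hxy⟩

/-- For a DG algebra `A` (graded by `𝒜` with differential `dA`) and a left DG
`A`-module `M` (graded by `ℳ` with differential `dM` satisfying the graded Leibniz rule),
and a graded `A`-submodule `N ⊆ M`, the external submodule `N₊ = N + dM(N)` and the internal
submodule `N₋ = {m ∈ N : dM m ∈ N}` are DG submodules of `M` (stable under the `A`-action and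
under `dM`), and the inclusion `N₋ ↪ N₊` is a quasi-isomorphism (it is surjective and injective
on cohomology). -/
theorem stmt0 (k : Type*) [Field k] (A : Type*) [Ring A] [Algebra k A]
    (M : Type*) [AddCommGroup M] [Module k M] [Module A M] [IsScalarTower k A M]
    -- grading of the DG algebra `A`
    (𝒜 : ℤ → Submodule k A) (hA : (⨆ i, 𝒜 i) = ⊤)
    (hAmul : ∀ (i j : ℤ), ∀ a ∈ 𝒜 i, ∀ b ∈ 𝒜 j, a * b ∈ 𝒜 (i + j))
    -- grading of the DG module `M`
    (ℳ : ℤ → Submodule k M) (hM : (⨆ i, ℳ i) = ⊤)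
    (hMsmul : ∀ (i j : ℤ), ∀ a ∈ 𝒜 i, ∀ m ∈ ℳ j, a • m ∈ ℳ (i + j))
    -- the differentials, of degree `+1`, squaring to zero
    (dA : A →ₗ[k] A) (dM : M →ₗ[k] M)
    (hdA1 : ∀ i, (𝒜 i).map dA ≤ 𝒜 (i + 1))
    (hdM1 : ∀ i, (ℳ i).map dM ≤ ℳ (i + 1))
    (hdA2 : ∀ a, dA (dA a) = 0) (hdM2 : ∀ m, dM (dM m) = 0)
    -- graded Leibniz rule for the module differential
    (hLeib : ∀ (i : ℤ), ∀ a ∈ 𝒜 i, ∀ m : M,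
      dM (a • m) = dA a • m + ((Int.negOnePow i : ℤˣ) : ℤ) • (a • dM m))
    -- a graded `A`-submodule `N` of `M`
    (N : Submodule A M)
    (hNgr : N.restrictScalars k = ⨆ i, N.restrictScalars k ⊓ ℳ i) :
    -- `N₊ := N + dM(N)` and `N₋ := {m ∈ N : dM m ∈ N}`
    ∀ NP NM : Submodule k M,
      NP = N.restrictScalars k ⊔ (N.restrictScalars k).map dM →
      NM = N.restrictScalars k ⊓ (N.restrictScalars k).comap dM →
      -- `N₊` and `N₋` are `A`-submodules of `M` ...
      (∀ a : A, ∀ m ∈ NP, a • m ∈ NP) ∧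
      (∀ a : A, ∀ m ∈ NM, a • m ∈ NM) ∧
      -- ... closed under the differential, i.e. DG submodules ...
      (∀ m ∈ NP, dM m ∈ NP) ∧
      (∀ m ∈ NM, dM m ∈ NM) ∧
      -- ... and the inclusion `N₋ ↪ N₊` is surjective on cohomology ...
      (∀ m ∈ NP, dM m = 0 → ∃ x ∈ NM, ∃ y ∈ NP, m = x + dM y) ∧
      -- ... and injective on cohomology.
      (∀ x ∈ NM, dM x = 0 → (∃ y ∈ NP, x = dM y) → ∃ z ∈ NM, x = dM z) :=
  stmt0_general k A M 𝒜 hA dA dM hdM2 hLeib N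
end

section
/- Let A = k⟨x₁,…,xₙ⟩ be a finite-cell DG algebra, i.e., the underlying graded algebra is free on x₁,…,xₙ and dxᵢ ∈ k⟨x₁,…,x_{i-1}⟩ for each i. Then for every nonzero polynomial f ∈ A with df ≠ 0, TIP(df) < TIP(f) with respect to the degree order, where TIP denotes the leading monomial. -/
/-!
Because degree vectors are compared by counts of the largest generators first, a generator `xᵢ`
dominates every word in the letters `x₁,…,x_{i-1}`; and the degree order is compatible with
multiplication on both sides (counts add, and words with equal degree vectors have equal
length). Hence, by induction on a word `w` through the Leibniz rule
`d(uv) = d(u) v ± u d(v)`, every monomial of `d w` is smaller than `w`. Since `d f` is a linear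
combination of the `d w` for `w` in the support of `f`, its leading monomial is smaller than
`TIP f`.
-/

noncomputable section

/-- The free algebra `k⟨x₁,…,xₙ⟩` as the monoid algebra of the free monoid on `n` letters. -/
abbrev FA (k : Type) [Field k] (n : ℕ) := MonoidAlgebra k (FreeMonoid (Fin n))

/-- The generator `xᵢ`. -/
def X {k : Type} [Field k] {n : ℕ} (i : Fin n) : FA k n :=
  MonoidAlgebra.single (FreeMonoid.of i) 1

/-- Cohomological degree of a word for generator degrees `degs`. -/
def wdeg {n : ℕ} (degs : Fin n → ℤ) (w : FreeMonoid (Fin n)) : ℤ :=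
  ((FreeMonoid.toList w).map degs).sum

/-- The sign operator `f ↦ Σ (-1)^{|w|} f_w · w` used in the graded Leibniz rule. -/
def sgn {k : Type} [Field k] {n : ℕ} (degs : Fin n → ℤ) (f : FA k n) : FA k n :=
  f.coeff.sum fun w c => ((Int.negOnePow (wdeg degs w) : ℤˣ) : ℤ) • MonoidAlgebra.single w c

/-- Degree-vector list of a word: counts of the generators with the count of `xₙ` first. -/
def dlist {n : ℕ} (w : FreeMonoid (Fin n)) : List ℕ :=
  (List.ofFn fun i : Fin n => (FreeMonoid.toList w).count i).reverse

/-- The degree order on monomials: compare degree vectors right-lexicographically first,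
then break ties by the right lexicographic word order with `x₁ ≺ ⋯ ≺ xₙ`. -/
instance degOrder {n : ℕ} : LinearOrder (FreeMonoid (Fin n)) :=
  LinearOrder.lift' (fun w => toLex (dlist w, (FreeMonoid.toList w).reverse))
    (fun a b h => by
      have h2 : (FreeMonoid.toList a).reverse = (FreeMonoid.toList b).reverse :=
        congrArg (fun p : Lex (List ℕ × List (Fin n)) => (ofLex p).2) h
      exact FreeMonoid.toList.injective (List.reverse_injective h2))

/-- `TIP f`: the largest monomial occurring in `f`, with `TIP 0 = ⊥`. -/
def TIP {k : Type} [Field k] {n : ℕ} (f : FA k n) : WithBot (FreeMonoid (Fin n)) :=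
  f.coeff.support.max

theorem List.ofFn_lt_ofFn_iff {α : Type*} [LT α] {n : ℕ} {f g : Fin n → α} :
    List.ofFn f < List.ofFn g ↔ ∃ i, f i < g i ∧ ∀ j < i, f j = g j := by
  rw [List.lt_iff_exists]
  simp only [List.length_ofFn, lt_irrefl, and_false, false_or, List.getElem_ofFn]
  constructor
  · rintro ⟨i, hi, _, heq, hlt⟩
    exact ⟨⟨i, hi⟩, hlt, fun j hj => heq j hj⟩
  · rintro ⟨i, hlt, heq⟩
    exact ⟨i, i.2, i.2, fun j hj => heq ⟨j, by omega⟩ hj, hlt⟩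

theorem List.append_lt_append_right_of_length_eq {α : Type*} [LT α] {l₁ l₂ : List α}
    (s : List α) (hlen : l₁.length = l₂.length) (h : l₁ < l₂) : l₁ ++ s < l₂ ++ s := by
  induction h with
  | nil => simp at hlen
  | rel hab => exact List.Lex.rel hab
  | cons _ ih => exact List.Lex.cons (ih (by simpa using hlen))

section DegOrder

variable {n : ℕ}

theorem dlist_eq_ofFn_rev (w : FreeMonoid (Fin n)) :
    dlist w = List.ofFn fun p : Fin n => w.toList.count p.rev := by
  rw [dlist, List.ofFn_eq_map, List.ofFn_eq_map, ← List.map_reverse, List.finRange_reverse,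
    List.map_map]
  rfl

theorem dlist_lt_dlist_iff {v w : FreeMonoid (Fin n)} :
    dlist v < dlist w ↔
      ∃ i, v.toList.count i < w.toList.count i ∧
        ∀ j, i < j → v.toList.count j = w.toList.count j := by
  rw [dlist_eq_ofFn_rev, dlist_eq_ofFn_rev, List.ofFn_lt_ofFn_iff]
  constructor
  · rintro ⟨p, hlt, heq⟩
    exact ⟨p.rev, hlt, fun j hj => by simpa using heq j.rev (Fin.rev_lt_iff.mpr hj)⟩
  · rintro ⟨i, hlt, heq⟩
    exact ⟨i.rev, by simpa using hlt, fun j hj => heq j.rev (Fin.lt_rev_iff.mpr hj)⟩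

theorem degOrder_lt_iff {v w : FreeMonoid (Fin n)} : v < w ↔
    dlist v < dlist w ∨ dlist v = dlist w ∧ v.toList.reverse < w.toList.reverse :=
  Prod.Lex.lt_iff

theorem dlist_eq_dlist_iff_perm {v w : FreeMonoid (Fin n)} :
    dlist v = dlist w ↔ v.toList.Perm w.toList := by
  rw [dlist, dlist, List.reverse_inj, List.ofFn_inj, List.perm_iff_count, funext_iff]

theorem count_toList_mul (j : Fin n) (v w : FreeMonoid (Fin n)) :
    (v * w).toList.count j = v.toList.count j + w.toList.count j := by
  rw [FreeMonoid.toList_mul, List.count_append]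

theorem dlist_mul_comm (v w : FreeMonoid (Fin n)) : dlist (v * w) = dlist (w * v) := by
  rw [dlist_eq_dlist_iff_perm, FreeMonoid.toList_mul, FreeMonoid.toList_mul]
  exact List.perm_append_comm

theorem dlist_mul_lt_dlist_mul_left {v w : FreeMonoid (Fin n)} (u : FreeMonoid (Fin n))
    (h : dlist v < dlist w) : dlist (u * v) < dlist (u * w) := by
  obtain ⟨i, hlt, heq⟩ := dlist_lt_dlist_iff.mp h
  refine dlist_lt_dlist_iff.mpr ⟨i, ?_, fun j hj => ?_⟩
  · simpa only [count_toList_mul] using Nat.add_lt_add_left hlt _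
  · simp only [count_toList_mul, heq j hj]

theorem degOrder_mul_lt_mul_left {v w : FreeMonoid (Fin n)} (u : FreeMonoid (Fin n))
    (h : v < w) : u * v < u * w := by
  rcases degOrder_lt_iff.mp h with hd | ⟨hd, hrev⟩
  · exact degOrder_lt_iff.mpr (.inl (dlist_mul_lt_dlist_mul_left u hd))
  · have hperm := dlist_eq_dlist_iff_perm.mp hd
    refine degOrder_lt_iff.mpr (.inr ⟨?_, ?_⟩)
    · simpa only [dlist_eq_dlist_iff_perm, FreeMonoid.toList_mul] using hperm.append_left _
    · simp only [FreeMonoid.toList_mul, List.reverse_append]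
      exact List.append_lt_append_right_of_length_eq _ (by simpa using hperm.length_eq) hrev

theorem degOrder_mul_lt_mul_right {v w : FreeMonoid (Fin n)} (u : FreeMonoid (Fin n))
    (h : v < w) : v * u < w * u := by
  rcases degOrder_lt_iff.mp h with hd | ⟨hd, hrev⟩
  · rw [degOrder_lt_iff, dlist_mul_comm v, dlist_mul_comm w]
    exact .inl (dlist_mul_lt_dlist_mul_left u hd)
  · refine degOrder_lt_iff.mpr (.inr ⟨?_, ?_⟩)
    · simpa only [dlist_eq_dlist_iff_perm, FreeMonoid.toList_mul] using
        (dlist_eq_dlist_iff_perm.mp hd).append_right _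
    · simp only [FreeMonoid.toList_mul, List.reverse_append]
      exact List.append_left_lt hrev

theorem degOrder_lt_of_of_forall_mem_lt {u : FreeMonoid (Fin n)} {i : Fin n}
    (h : ∀ j ∈ u.toList, j < i) : u < FreeMonoid.of i := by
  have hcount : ∀ j, i ≤ j → u.toList.count j = 0 := fun j hj =>
    List.count_eq_zero.mpr fun hmem => (h j hmem).not_ge hj
  refine degOrder_lt_iff.mpr (.inl (dlist_lt_dlist_iff.mpr ⟨i, ?_, fun j hj => ?_⟩))
  · simp [hcount i le_rfl]
  · simp [hcount j hj.le, FreeMonoid.toList_of, hj.ne]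

end DegOrder

section Differential

variable {k : Type} [Field k] {n : ℕ}

open MonoidAlgebra

theorem sgn_single (degs : Fin n → ℤ) (w : FreeMonoid (Fin n)) (c : k) :
    sgn degs (single w c) = single w ((((wdeg degs w).negOnePow : ℤˣ) : ℤ) • c) := by
  rw [sgn, coeff_single, Finsupp.sum_single_index (by simp), smul_single]

theorem sgn_one (degs : Fin n → ℤ) : sgn degs (1 : FA k n) = 1 := by
  have hdeg : wdeg degs 1 = 0 := by simp [wdeg]
  rw [one_def, sgn_single, hdeg]
  simp

theorem map_one_eq_zero_of_leibniz (degs : Fin n → ℤ) (d : FA k n →ₗ[k] FA k n)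
    (hLeib : ∀ f g : FA k n, d (f * g) = d f * g + sgn degs f * d g) :
    d 1 = 0 := by
  simpa [sgn_one] using hLeib 1 1

theorem forall_mem_toList_of_mem_adjoin {p : Fin n → Prop} {a : FA k n}
    (ha : a ∈ Algebra.adjoin k {x : FA k n | ∃ j, p j ∧ x = X j}) :
    ∀ w ∈ a.coeff.support, ∀ j ∈ w.toList, p j := by
  classical
  induction ha using Algebra.adjoin_induction with
  | mem x hx =>
    obtain ⟨j, hj, rfl⟩ := hx
    intro w hw i hi
    obtain rfl : w = FreeMonoid.of j := Finset.mem_singleton.mp (Finsupp.support_single_subset hw)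
    rw [FreeMonoid.toList_of, List.mem_singleton] at hi
    exact hi ▸ hj
  | algebraMap r =>
    intro w hw i hi
    obtain rfl : w = 1 := Finset.mem_singleton.mp (Finsupp.support_single_subset hw)
    simp at hi
  | add x y _ _ hx hy =>
    intro w hw
    rcases Finset.mem_union.mp (Finsupp.support_add hw) with h | h
    exacts [hx w h, hy w h]
  | mul x y _ _ hx hy =>
    intro w hw i hi
    obtain ⟨u, hu, v, hv, rfl⟩ := Finset.mem_mul.mp (support_coeff_mul_subset x y hw)
    rcases List.mem_append.mp (FreeMonoid.toList_mul u v ▸ hi) with h | h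
    exacts [hx u hu i h, hy v hv i h]

theorem lt_of_mem_support_map_single (degs : Fin n → ℤ) (d : FA k n →ₗ[k] FA k n)
    (hLeib : ∀ f g : FA k n, d (f * g) = d f * g + sgn degs f * d g)
    (hcell : ∀ i : Fin n,
      d (X i) ∈ Algebra.adjoin k {x : FA k n | ∃ j : Fin n, j < i ∧ x = X j})
    (w : FreeMonoid (Fin n)) : ∀ u ∈ (d (single w 1)).coeff.support, u < w := by
  classical
  induction w using FreeMonoid.inductionOn with
  | one => simp [← one_def, map_one_eq_zero_of_leibniz degs d hLeib]
  | of i =>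
    exact fun u hu =>
      degOrder_lt_of_of_forall_mem_lt (forall_mem_toList_of_mem_adjoin (hcell i) u hu)
  | mul x y hx hy =>
    intro u hu
    rw [← mul_one (1 : k), ← single_mul_single, hLeib, sgn_single] at hu
    rcases Finset.mem_union.mp (Finsupp.support_add hu) with h | h
    · obtain ⟨v, hv, rfl⟩ := Finset.mem_image.mp (support_coeff_mul_single_subset _ _ _ h)
      exact degOrder_mul_lt_mul_right y (hx v hv)
    · obtain ⟨v, hv, rfl⟩ := Finset.mem_image.mp (support_coeff_single_mul_subset _ _ _ h)
      exact degOrder_mul_lt_mul_left x (hy v hv)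

theorem TIP_map_lt_of_forall_support_lt (L : FA k n →ₗ[k] FA k n)
    (hL : ∀ w, ∀ u ∈ (L (single w 1)).coeff.support, u < w) {f : FA k n} (hLf : L f ≠ 0) :
    TIP (L f) < TIP f := by
  classical
  obtain ⟨m, hm⟩ :=
    Finset.max_of_nonempty (Finsupp.support_nonempty_iff.mpr (coeff_eq_zero.not.mpr hLf))
  have hexpand : L f = f.coeff.sum fun w c => c • L (single w 1) := by
    conv_lhs => rw [← sum_coeff_single f]
    simp only [map_finsuppSum, ← map_smul, smul_single, smul_eq_mul, mul_one]
  have hmL : m ∈ (L f).coeff.support := Finset.mem_of_max hm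
  rw [hexpand, coeff_finsuppSum] at hmL
  obtain ⟨w, hw, hmw⟩ := Finset.mem_biUnion.mp (Finsupp.support_sum hmL)
  calc TIP (L f) = m := hm
    _ < w := WithBot.coe_lt_coe.mpr (hL w m (Finsupp.support_smul hmw))
    _ ≤ TIP f := Finset.le_max hw

end Differential

theorem stmt6_general (k : Type) [Field k] (n : ℕ) (degs : Fin n → ℤ)
    (d : FA k n →ₗ[k] FA k n)
    (hLeib : ∀ f g : FA k n, d (f * g) = d f * g + sgn degs f * d g)
    (hcell : ∀ i : Fin n,
      d (X i) ∈ Algebra.adjoin k {x : FA k n | ∃ j : Fin n, j < i ∧ x = X j}) :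
    ∀ f : FA k n, f ≠ 0 → d f ≠ 0 → TIP (d f) < TIP f :=
  fun _ _ hdf =>
    TIP_map_lt_of_forall_support_lt d (lt_of_mem_support_map_single degs d hLeib hcell) hdf

/-- Let `A = k⟨x₁,…,xₙ⟩` be a finite-cell DG algebra: the differential `d` is
`k`-linear, squares to zero, obeys the graded Leibniz rule (for generator degrees `degs`),
and `d xᵢ` lies in the subalgebra generated by `x₁,…,x_{i-1}`. Then for every nonzero
`f ∈ A` with `d f ≠ 0`, we have `TIP (d f) < TIP f` in the degree order. -/
theorem stmt6 (k : Type) [Field k] (n : ℕ) (degs : Fin n → ℤ)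
    (d : FA k n →ₗ[k] FA k n)
    (hd2 : ∀ f, d (d f) = 0)
    (hLeib : ∀ f g : FA k n, d (f * g) = d f * g + sgn degs f * d g)
    (hcell : ∀ i : Fin n,
      d (X i) ∈ Algebra.adjoin k {x : FA k n | ∃ j : Fin n, j < i ∧ x = X j}) :
    ∀ f : FA k n, f ≠ 0 → d f ≠ 0 → TIP (d f) < TIP f :=
  stmt6_general k n degs d hLeib hcell
end
end

section
/- Let A = (k⟨x₁,…,xₙ⟩, d) be a finite-cell DG algebra and suppose dx_j = x_i for some pair i < j. Then the two-sided DG ideal (x_i, x_j) is acyclic. -/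
/-!
Let `S` be the linear map sending a word to the word obtained by replacing its first letter among
`xᵢ, xⱼ` by `xⱼ` if that letter is `xᵢ`, and to `0` if it is `xⱼ`, with the Koszul sign of the
letters passed over. `S` is a contracting homotopy for the leading part `xⱼ ↦ xᵢ` of `d`: the
defect `dS + Sd - 1` vanishes on `xᵢ·A` and `xⱼ·A` (using `sign degs i + sign degs j = 0`,
which `d²(xⱼ²) = 0` forces), and on `xₐ·w` for any other generator it differs from
`xₐ·(dS + Sd - 1)(w)` only by terms involving `d xₐ`. Weight `xⱼ` like `xᵢ` and every other
generator above all words of its differential, which is possible because `d xₘ` only involves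
earlier generators. Then `S` preserves weight and the defect strictly lowers it on the ideal, so
induction on the weight writes every cycle of the ideal as the boundary of an element of the ideal.
-/

noncomputable section

namespace MonoidAlgebra

variable {R M N : Type*} [CommSemiring R]

theorem mul_mem_supported [Mul M] {s t u : Set M} {x y : MonoidAlgebra R M}
    (hx : x ∈ supported R R s) (hy : y ∈ supported R R t) (h : ∀ a ∈ s, ∀ b ∈ t, a * b ∈ u) :
    x * y ∈ supported R R u := by
  classical
  intro m hm
  obtain ⟨a, ha, b, hb, rfl⟩ := Finset.mem_mul.1 (support_coeff_mul_subset x y hm)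
  exact h a (hx ha) b (hy hb)

theorem map_mem_of_mem_supported [AddCommMonoid N] [Module R N] {s : Set M}
    {T : MonoidAlgebra R M →ₗ[R] N} {Q : Submodule R N} (h : ∀ m ∈ s, T (single m 1) ∈ Q)
    {x : MonoidAlgebra R M} (hx : x ∈ supported R R s) : T x ∈ Q := by
  rw [supported_eq_span_single] at hx
  refine (Submodule.span_le (p := Q.comap T)).2 ?_ hx
  rintro _ ⟨m, hm, rfl⟩
  exact h m hm

theorem single_mem_supported {s : Set M} {m : M} (r : R) (hm : m ∈ s) :
    single m r ∈ supported R R s :=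
  Finsupp.single_mem_supported R r hm

theorem mem_supported_univ (x : MonoidAlgebra R M) : x ∈ supported R R Set.univ :=
  fun _ _ => trivial

end MonoidAlgebra

theorem exists_preimage_of_filtered_homotopy {R V : Type*} [Ring R] [AddCommGroup V] [Module R V]
    {d S : V →ₗ[R] V} {J : Submodule R V} {F : ℕ → Submodule R V}
    (hF0 : F 0 = ⊥) (hF : ∀ f, ∃ N, f ∈ F N) (hd2 : ∀ f, d (d f) = 0)
    (hdJ : ∀ f ∈ J, d f ∈ J) (hSJ : ∀ f ∈ J, S f ∈ J)
    (hdefect : ∀ N, ∀ f ∈ J, f ∈ F (N + 1) → d (S f) + S (d f) - f ∈ F N)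
    {f : V} (hfJ : f ∈ J) (hdf : d f = 0) : ∃ g ∈ J, d g = f := by
  obtain ⟨N, hfN⟩ := hF f
  induction N generalizing f with
  | zero =>
    rw [hF0, Submodule.mem_bot] at hfN
    exact ⟨0, J.zero_mem, by rw [map_zero, hfN]⟩
  | succ N ih =>
    have hrest : f - d (S f) = -(d (S f) + S (d f) - f) := by rw [hdf, map_zero]; abel
    obtain ⟨g, hgJ, hg⟩ := ih (J.sub_mem hfJ (hdJ _ (hSJ f hfJ)))
      (by rw [map_sub, hd2, hdf, sub_zero]) (hrest ▸ (F N).neg_mem (hdefect N f hfJ hfN))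
    exact ⟨S f + g, J.add_mem (hSJ f hfJ) hgJ, by rw [map_add, hg, add_sub_cancel]⟩

namespace FA

open MonoidAlgebra

variable {k : Type} [Field k] {n : ℕ}

def sign (degs : Fin n → ℤ) (a : Fin n) : k := ((degs a).negOnePow : ℤ)

theorem sign_mul_self (degs : Fin n → ℤ) (a : Fin n) : sign degs a * sign degs a = (1 : k) := by
  rw [sign, ← Int.cast_mul, ← Units.val_mul, Int.units_mul_self, Units.val_one, Int.cast_one]

theorem sgn_X (degs : Fin n → ℤ) (a : Fin n) :
    sgn degs (X a : FA k n) = (sign degs a : k) • (X a : FA k n) := by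
  simp [sgn, X, wdeg, sign, Finsupp.sum_single_index]

theorem X_mul_single (a : Fin n) (w : FreeMonoid (Fin n)) (c : k) :
    (X a : FA k n) * single w c = single (FreeMonoid.of a * w) c := by
  rw [X, single_mul_single, one_mul]

theorem X_mul_X_ne_zero (a b : Fin n) : (X a * X b : FA k n) ≠ 0 := by
  simp [X, single_mul_single]

def IsGradedDerivation (degs : Fin n → ℤ) (d : FA k n →ₗ[k] FA k n) : Prop :=
  ∀ f g : FA k n, d (f * g) = d f * g + sgn degs f * d g

section Leibniz

variable {degs : Fin n → ℤ} {d : FA k n →ₗ[k] FA k n}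

theorem map_X_mul (hLeib : IsGradedDerivation degs d) (a : Fin n) (f : FA k n) :
    d ((X a : FA k n) * f) = d (X a) * f + (sign degs a : k) • ((X a : FA k n) * d f) := by
  rw [hLeib, sgn_X, smul_mul_assoc]

theorem sign_add_sign_eq_zero (hLeib : IsGradedDerivation degs d) (hd2 : ∀ f, d (d f) = 0)
    {i j : Fin n} (hdj : d (X j) = X i) :
    sign degs i + sign degs j = (0 : k) := by
  have hdi : d (X i : FA k n) = 0 := hdj ▸ hd2 (X j)
  have h : (sign degs i + sign degs j : k) • (X i * X i : FA k n) = 0 := by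
    rw [← hd2 (X j * X j), map_X_mul hLeib, hdj, map_add, map_smul, map_X_mul hLeib,
      map_X_mul hLeib, hdj, hdi, add_smul]
    simp
  exact (smul_eq_zero.1 h).resolve_right (X_mul_X_ne_zero i i)

end Leibniz

variable (k) in
def pairIdeal (i j : Fin n) : Submodule k (FA k n) := supported k k {w | i ∈ w ∨ j ∈ w}

section PairIdeal

variable {i j : Fin n} {f g : FA k n}

theorem mul_mem_pairIdeal_left (hf : f ∈ pairIdeal k i j) : f * g ∈ pairIdeal k i j :=
  mul_mem_supported hf (mem_supported_univ g) fun u hu v _ => by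
    simp only [Set.mem_ofPred_eq, FreeMonoid.mem_mul] at hu ⊢
    tauto

theorem mul_mem_pairIdeal_right (hg : g ∈ pairIdeal k i j) : f * g ∈ pairIdeal k i j :=
  mul_mem_supported (mem_supported_univ f) hg fun u _ v hv => by
    simp only [Set.mem_ofPred_eq, FreeMonoid.mem_mul] at hv ⊢
    tauto

theorem X_mem_pairIdeal {a : Fin n} (ha : a = i ∨ a = j) : (X a : FA k n) ∈ pairIdeal k i j :=
  single_mem_supported 1 (by simpa [eq_comm] using ha)

theorem span_eq_pairIdeal :
    Submodule.span k {x : FA k n | ∃ a b : FA k n, x = a * X i * b ∨ x = a * X j * b} =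
      pairIdeal k i j := by
  apply le_antisymm
  · rw [Submodule.span_le]
    rintro _ ⟨a, b, rfl | rfl⟩ <;>
      exact mul_mem_pairIdeal_left (mul_mem_pairIdeal_right (X_mem_pairIdeal (by simp)))
  · rw [pairIdeal, supported_eq_span_single, Submodule.span_le]
    rintro _ ⟨w, hw, rfl⟩
    obtain ⟨a, ha, haw⟩ : ∃ a, (a = i ∨ a = j) ∧ a ∈ w := by
      rcases hw with h | h
      exacts [⟨i, .inl rfl, h⟩, ⟨j, .inr rfl, h⟩]
    obtain ⟨u, v, huv⟩ := List.append_of_mem haw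
    have hfac : single w (1 : k) =
        single (FreeMonoid.ofList u) 1 * X a * single (FreeMonoid.ofList v) 1 := by
      rw [X, single_mul_single, single_mul_single, one_mul, one_mul, mul_assoc]
      exact congrArg (single · 1) huv
    refine Submodule.subset_span
      ⟨single (FreeMonoid.ofList u) 1, single (FreeMonoid.ofList v) 1, ?_⟩
    rcases ha with rfl | rfl
    exacts [.inl hfac, .inr hfac]

theorem map_mem_pairIdeal {degs : Fin n → ℤ} {d : FA k n →ₗ[k] FA k n}
    (hLeib : IsGradedDerivation degs d) (hd2 : ∀ f, d (d f) = 0) (hdj : d (X j) = X i)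
    (hf : f ∈ pairIdeal k i j) :
    d f ∈ pairIdeal k i j := by
  refine map_mem_of_mem_supported (fun w hw => ?_) hf
  induction w using FreeMonoid.inductionOn' with
  | one => simp [FreeMonoid.notMem_one] at hw
  | of_mul a w ih =>
    rw [← X_mul_single, map_X_mul hLeib]
    by_cases ha : a = i ∨ a = j
    · refine add_mem ?_ (Submodule.smul_mem _ _ (mul_mem_pairIdeal_left (X_mem_pairIdeal ha)))
      rcases ha with rfl | rfl
      · rw [← hdj, hd2, zero_mul]
        exact zero_mem _
      · rw [hdj]
        exact mul_mem_pairIdeal_left (X_mem_pairIdeal (.inl rfl))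
    · have hw' : i ∈ w ∨ j ∈ w := by
        simp only [Set.mem_ofPred_eq, FreeMonoid.mem_mul, FreeMonoid.mem_of] at hw
        grind
      exact add_mem (mul_mem_pairIdeal_right (single_mem_supported 1 hw'))
        (Submodule.smul_mem _ _ (mul_mem_pairIdeal_right (ih hw')))

end PairIdeal

def weight (φ : Fin n → ℕ) (w : FreeMonoid (Fin n)) : ℕ := (w.toList.map φ).sum

theorem weight_mul (φ : Fin n → ℕ) (u v : FreeMonoid (Fin n)) :
    weight φ (u * v) = weight φ u + weight φ v := by
  simp [weight, FreeMonoid.toList_mul]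

theorem weight_of (φ : Fin n → ℕ) (a : Fin n) : weight φ (FreeMonoid.of a) = φ a := by
  simp [weight, FreeMonoid.toList_of]

variable (k) in
def lowWeight (φ : Fin n → ℕ) (N : ℕ) : Submodule k (FA k n) :=
  supported k k {w | weight φ w < N}

section LowWeight

variable {φ : Fin n → ℕ} {f g : FA k n} {N M : ℕ}

theorem lowWeight_mono (φ : Fin n → ℕ) : Monotone (lowWeight k φ) :=
  fun _ _ hNM => supported_mono fun _ hw => lt_of_lt_of_le hw hNM

theorem lowWeight_zero : lowWeight k φ 0 = ⊥ := by
  simp [lowWeight, supported_eq_span_single]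

theorem exists_mem_lowWeight (f : FA k n) : ∃ N, f ∈ lowWeight k φ N :=
  ⟨f.coeff.support.sup (weight φ) + 1, fun _ hw => Nat.lt_succ_of_le (Finset.le_sup hw)⟩

theorem single_mem_lowWeight (w : FreeMonoid (Fin n)) (c : k) :
    single w c ∈ lowWeight k φ (weight φ w + 1) :=
  single_mem_supported c (Nat.lt_succ_self _)

theorem mul_mem_lowWeight (hf : f ∈ lowWeight k φ N) (hg : g ∈ lowWeight k φ (M + 1)) :
    f * g ∈ lowWeight k φ (N + M) :=
  mul_mem_supported hf hg fun u hu v hv => by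
    simp only [Set.mem_ofPred_eq, weight_mul] at hu hv ⊢
    omega

theorem X_mul_mem_lowWeight (a : Fin n) (hf : f ∈ lowWeight k φ N) :
    X a * f ∈ lowWeight k φ (φ a + N) :=
  mul_mem_supported (single_mem_supported 1 (Set.mem_singleton _)) hf fun u hu v hv => by
    simp only [Set.mem_singleton_iff, Set.mem_ofPred_eq] at hu hv ⊢
    rw [hu, weight_mul, weight_of]
    omega

end LowWeight

def homotopyWord (degs : Fin n → ℤ) (i j : Fin n) (w : FreeMonoid (Fin n)) : FA k n :=
  FreeMonoid.recOn w 0 fun a w h =>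
    if a = i then X j * single w 1 else if a = j then 0 else (sign degs a : k) • (X a * h)

theorem homotopyWord_of_mul (degs : Fin n → ℤ) (i j a : Fin n) (w : FreeMonoid (Fin n)) :
    (homotopyWord degs i j (FreeMonoid.of a * w) : FA k n) =
      if a = i then X j * single w 1 else if a = j then 0
      else (sign degs a : k) • (X a * homotopyWord degs i j w) :=
  rfl

variable (k) in
def homotopy (degs : Fin n → ℤ) (i j : Fin n) : FA k n →ₗ[k] FA k n :=
  (MonoidAlgebra.basis _ k).constr k (homotopyWord degs i j)

section Homotopy

variable {degs : Fin n → ℤ} {i j : Fin n}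

theorem homotopy_single (w : FreeMonoid (Fin n)) (c : k) :
    homotopy k degs i j (single w c) = c • homotopyWord degs i j w := by
  rw [← mul_one c, ← smul_single', ← basis_apply, map_smul, homotopy, Module.Basis.constr_basis,
    mul_one]

theorem homotopy_X_mul (a : Fin n) (f : FA k n) :
    homotopy k degs i j (X a * f) =
      if a = i then X j * f else if a = j then 0
      else (sign degs a : k) • (X a * homotopy k degs i j f) := by
  induction f using MonoidAlgebra.induction_linear with
  | zero => simp
  | add f g hf hg => split_ifs <;> simp_all [mul_add, smul_add]
  | single w c =>
    rw [X_mul_single, homotopy_single, homotopy_single, homotopyWord_of_mul]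
    split_ifs <;> simp [X_mul_single, smul_comm c]


theorem homotopyWord_mem_pairIdeal (w : FreeMonoid (Fin n)) :
    (homotopyWord degs i j w : FA k n) ∈ pairIdeal k i j := by
  induction w using FreeMonoid.inductionOn' with
  | one => exact zero_mem _
  | of_mul a w ih =>
    rw [homotopyWord_of_mul]
    split_ifs
    · exact mul_mem_pairIdeal_left (X_mem_pairIdeal (.inr rfl))
    · exact zero_mem _
    · exact Submodule.smul_mem _ _ (mul_mem_pairIdeal_right ih)

theorem homotopy_mem_pairIdeal (f : FA k n) : homotopy k degs i j f ∈ pairIdeal k i j := by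
  refine map_mem_of_mem_supported (fun w _ => ?_) (mem_supported_univ f)
  rw [homotopy_single, one_smul]
  exact homotopyWord_mem_pairIdeal w

theorem homotopyWord_mem_lowWeight {φ : Fin n → ℕ} (hφ : φ j = φ i) (w : FreeMonoid (Fin n)) :
    (homotopyWord degs i j w : FA k n) ∈ lowWeight k φ (weight φ w + 1) := by
  induction w using FreeMonoid.inductionOn' with
  | one => exact zero_mem _
  | of_mul a w ih =>
    rw [homotopyWord_of_mul, weight_mul, weight_of, add_assoc]
    split_ifs with hai
    · rw [X_mul_single, hai, ← hφ, ← add_assoc, ← weight_of φ j, ← weight_mul]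
      exact single_mem_lowWeight _ _
    · exact zero_mem _
    · exact Submodule.smul_mem _ _ (X_mul_mem_lowWeight a ih)

theorem homotopy_mem_lowWeight {φ : Fin n → ℕ} (hφ : φ j = φ i) {N : ℕ} {f : FA k n}
    (hf : f ∈ lowWeight k φ N) : homotopy k degs i j f ∈ lowWeight k φ N := by
  refine map_mem_of_mem_supported (fun w hw => lowWeight_mono φ hw ?_) hf
  rw [homotopy_single, one_smul]
  exact homotopyWord_mem_lowWeight hφ w

end Homotopy

variable (k) in
def homotopyDefect (d : FA k n →ₗ[k] FA k n) (degs : Fin n → ℤ) (i j : Fin n) :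
    FA k n →ₗ[k] FA k n :=
  d ∘ₗ homotopy k degs i j + homotopy k degs i j ∘ₗ d - LinearMap.id

section HomotopyDefect

variable {degs : Fin n → ℤ} {d : FA k n →ₗ[k] FA k n} {i j : Fin n}

theorem homotopyDefect_apply (f : FA k n) :
    homotopyDefect k d degs i j f = d (homotopy k degs i j f) + homotopy k degs i j (d f) - f :=
  rfl

theorem homotopyDefect_Xi_mul (hLeib : IsGradedDerivation degs d)
    (hd2 : ∀ f, d (d f) = 0) (hdj : d (X j) = X i) (f : FA k n) :
    homotopyDefect k d degs i j (X i * f) = 0 := by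
  have hdi : d (X i : FA k n) = 0 := hdj ▸ hd2 (X j)
  rw [homotopyDefect_apply, homotopy_X_mul, if_pos rfl, map_X_mul hLeib, map_X_mul hLeib, hdj,
    hdi, zero_mul, zero_add, map_smul, homotopy_X_mul, if_pos rfl, add_assoc, add_sub_cancel_left,
    ← add_smul, add_comm, sign_add_sign_eq_zero hLeib hd2 hdj, zero_smul]

theorem homotopyDefect_Xj_mul (hLeib : IsGradedDerivation degs d) (hdj : d (X j) = X i)
    (hij : i ≠ j) (f : FA k n) :
    homotopyDefect k d degs i j (X j * f) = 0 := by
  rw [homotopyDefect_apply, homotopy_X_mul, if_neg hij.symm, if_pos rfl, map_zero, zero_add,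
    map_X_mul hLeib, hdj, map_add, map_smul, homotopy_X_mul, if_pos rfl, homotopy_X_mul,
    if_neg hij.symm, if_pos rfl, smul_zero, add_zero, sub_self]

theorem homotopyDefect_X_mul (hLeib : IsGradedDerivation degs d) {a : Fin n} (hai : a ≠ i)
    (haj : a ≠ j) (f : FA k n) :
    homotopyDefect k d degs i j (X a * f) =
      (sign degs a : k) • (d (X a) * homotopy k degs i j f) + homotopy k degs i j (d (X a) * f)
        + X a * homotopyDefect k d degs i j f := by
  have hS (g : FA k n) :
      homotopy k degs i j (X a * g) = (sign degs a : k) • (X a * homotopy k degs i j g) := by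
    rw [homotopy_X_mul, if_neg hai, if_neg haj]
  rw [homotopyDefect_apply, homotopyDefect_apply, hS, map_smul, map_X_mul hLeib, map_X_mul hLeib,
    map_add, map_smul, hS, smul_add, smul_smul, smul_smul, sign_mul_self, one_smul, one_smul,
    mul_sub, mul_add]
  abel

theorem homotopyDefect_single_mem_lowWeight (hLeib : IsGradedDerivation degs d)
    (hd2 : ∀ f, d (d f) = 0) (hdj : d (X j) = X i) (hij : i ≠ j) {φ : Fin n → ℕ}
    (hφ : φ j = φ i) (hφd : ∀ l, l ≠ j → d (X l) ∈ lowWeight k φ (φ l))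
    {w : FreeMonoid (Fin n)} (hw : i ∈ w ∨ j ∈ w) :
    homotopyDefect k d degs i j (single w 1) ∈ lowWeight k φ (weight φ w) := by
  induction w using FreeMonoid.inductionOn' with
  | one => simp [FreeMonoid.notMem_one] at hw
  | of_mul a w ih =>
    rw [← X_mul_single]
    by_cases hai : a = i
    · rw [hai, homotopyDefect_Xi_mul hLeib hd2 hdj]
      exact zero_mem _
    by_cases haj : a = j
    · rw [haj, homotopyDefect_Xj_mul hLeib hdj hij]
      exact zero_mem _
    have hw' : i ∈ w ∨ j ∈ w := by
      simp only [FreeMonoid.mem_mul, FreeMonoid.mem_of] at hw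
      grind
    rw [homotopyDefect_X_mul hLeib hai haj, weight_mul, weight_of]
    refine add_mem (add_mem ?_ ?_) (X_mul_mem_lowWeight a (ih hw'))
    · exact Submodule.smul_mem _ _ (mul_mem_lowWeight (hφd a haj)
        (homotopy_mem_lowWeight hφ (single_mem_lowWeight w 1)))
    · exact homotopy_mem_lowWeight hφ (mul_mem_lowWeight (hφd a haj) (single_mem_lowWeight w 1))

theorem homotopyDefect_mem_lowWeight (hLeib : IsGradedDerivation degs d)
    (hd2 : ∀ f, d (d f) = 0) (hdj : d (X j) = X i) (hij : i ≠ j) {φ : Fin n → ℕ}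
    (hφ : φ j = φ i) (hφd : ∀ l, l ≠ j → d (X l) ∈ lowWeight k φ (φ l)) {N : ℕ} {f : FA k n}
    (hfJ : f ∈ pairIdeal k i j) (hfN : f ∈ lowWeight k φ (N + 1)) :
    homotopyDefect k d degs i j f ∈ lowWeight k φ N :=
  map_mem_of_mem_supported (fun _ hw => lowWeight_mono φ (Nat.lt_succ_iff.1 hw.2)
    (homotopyDefect_single_mem_lowWeight hLeib hd2 hdj hij hφ hφd hw.1))
    (Set.subset_inter hfJ hfN : f ∈ supported k k _)

end HomotopyDefect

theorem mem_supported_of_mem_adjoin {m : Fin n} {x : FA k n}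
    (hx : x ∈ Algebra.adjoin k {y : FA k n | ∃ l : Fin n, l < m ∧ y = X l}) :
    x ∈ supported k k {w | ∀ b ∈ w, b < m} := by
  induction hx using Algebra.adjoin_induction with
  | mem x hx =>
    obtain ⟨l, hl, rfl⟩ := hx
    exact single_mem_supported 1 fun b hb => (FreeMonoid.mem_of.1 hb) ▸ hl
  | algebraMap r => exact single_mem_supported r fun b hb => absurd hb FreeMonoid.notMem_one
  | add x y _ _ hx hy => exact add_mem hx hy
  | mul x y _ _ hx hy =>
    exact mul_mem_supported hx hy fun u hu v hv b hb =>
      (FreeMonoid.mem_mul.1 hb).elim (hu b) (hv b)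

theorem exists_weight_of_triangular {d : FA k n →ₗ[k] FA k n}
    (hcell : ∀ m, d (X m) ∈ supported k k {w | ∀ b ∈ w, b < m}) {i j : Fin n} (hij : i < j) :
    ∃ φ : Fin n → ℕ, φ j = φ i ∧ ∀ l, l ≠ j → d (X l) ∈ lowWeight k φ (φ l) := by
  -- `xᵦ` gets weight `(L + 1) ^ b`, except that `xⱼ` gets the weight of `xᵢ`; `L` bounds the
  -- lengths of the words occurring in the differentials of the generators.
  set L := Finset.univ.sup fun l => (d (X l)).coeff.support.sup FreeMonoid.length
  let φ : Fin n → ℕ := fun b => (L + 1) ^ (if b = j then (i : ℕ) else b)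
  refine ⟨φ, by simp [φ], fun l hl w hw => ?_⟩
  have hlen : w.length ≤ L := (Finset.le_sup hw).trans <|
    Finset.le_sup (f := fun l => (d (X l)).coeff.support.sup FreeMonoid.length) (Finset.mem_univ l)
  have hletter : ∀ b ∈ w.toList, φ b * (L + 1) ≤ (L + 1) ^ (l : ℕ) := by
    intro b hb
    have hbl : b < l := hcell l hw b hb
    rw [← pow_succ]
    refine Nat.pow_le_pow_right L.succ_pos ?_
    split_ifs with hbj
    · rw [hbj] at hbl
      exact hij.trans hbl
    · exact hbl
  have hsum : weight φ w * (L + 1) ≤ w.length * (L + 1) ^ (l : ℕ) := by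
    rw [weight, ← List.sum_map_mul_right]
    have := List.sum_le_card_nsmul (w.toList.map fun b => φ b * (L + 1)) _ fun x hx => by
      obtain ⟨b, hb, rfl⟩ := List.mem_map.1 hx
      exact hletter b hb
    simpa [FreeMonoid.length] using this
  have hφl : φ l = (L + 1) ^ (l : ℕ) := by simp [φ, hl]
  show weight φ w < φ l
  rw [hφl]
  refine Nat.lt_of_mul_lt_mul_right (a := L + 1) (hsum.trans_lt ?_)
  calc w.length * (L + 1) ^ (l : ℕ) ≤ L * (L + 1) ^ (l : ℕ) := Nat.mul_le_mul_right _ hlen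
    _ < (L + 1) ^ (l : ℕ) * (L + 1) := by
      rw [mul_comm]; exact Nat.mul_lt_mul_of_pos_left L.lt_succ_self (by positivity)

end FA

open FA in
/-- Let `A = (k⟨x₁,…,xₙ⟩, d)` be a finite-cell DG algebra (`d` is `k`-linear,
squares to zero, obeys the graded Leibniz rule for generator degrees `degs`, and `d xₘ`
lies in the subalgebra generated by `x₁,…,x_{m-1}`), and suppose `d x_j = x_i` with
`i < j`. Then the two-sided DG ideal `(x_i, x_j)` is acyclic: it is closed under `d` and
every cycle in it is a boundary of an element of it. -/
theorem stmt11 (k : Type) [Field k] (n : ℕ) (degs : Fin n → ℤ)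
    (d : FA k n →ₗ[k] FA k n)
    (hd2 : ∀ f, d (d f) = 0)
    (hLeib : ∀ f g : FA k n, d (f * g) = d f * g + sgn degs f * d g)
    (hcell : ∀ m : Fin n,
      d (X m) ∈ Algebra.adjoin k {x : FA k n | ∃ l : Fin n, l < m ∧ x = X l})
    (i j : Fin n) (hij : i < j) (hdj : d (X j) = X i)
    (I : Submodule k (FA k n))
    (hI : I = Submodule.span k {x | ∃ a b : FA k n, x = a * X i * b ∨ x = a * X j * b}) :
    (∀ f ∈ I, d f ∈ I) ∧ (∀ f ∈ I, d f = 0 → ∃ g ∈ I, d g = f) := by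
  subst hI
  rw [span_eq_pairIdeal]
  have hdJ (f : FA k n) (hf : f ∈ pairIdeal k i j) : d f ∈ pairIdeal k i j :=
    map_mem_pairIdeal hLeib hd2 hdj hf
  obtain ⟨φ, hφ, hφd⟩ :=
    exists_weight_of_triangular (fun m => mem_supported_of_mem_adjoin (hcell m)) hij
  refine ⟨hdJ, fun f hf hdf =>
    exists_preimage_of_filtered_homotopy (S := homotopy k degs i j) lowWeight_zero
      exists_mem_lowWeight hd2 hdJ (fun f _ => homotopy_mem_pairIdeal f)
      (fun _ _ hfJ hfN => homotopyDefect_mem_lowWeight hLeib hd2 hdj hij.ne hφ hφd hfJ hfN) hf hdf⟩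
end
end
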